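/- arXiv:1303.1777 — 2 statements merged into one kernel-verified Lean document; each statement's English description precedes it below -/
import Mathlib

section
/- Let k ≥ 1 and n ≥ 1 be natural numbers, let G_n = {(j₁/n, …, j_k/n) : jᵢ ∈ {0,1,…,n}} ⊂ [0,1]^k be the uniform grid with spacing h = 1/n, let ω be a modulus of continuity that is strictly increasing, and let R be a real number with R ≥ ω(√k/(2n)). Then the minimax reconstruction error over the bounded class U = {x ∈ X_ω : sup_{t∈[0,1]^k} |x(t)| ≤ R}, namely inf over all maps g : (G_n → ℝ) → ([0,1]^k → ℝ) of sup over x ∈ U of sup_{τ ∈ [0,1]^k} |x(τ) − g(x|_{G_n})(τ)|, equals ω(√k/(2n)). -/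
noncomputable section

/-- The unit cube $[0,1]^k$ in $\mathbb{R}^k$ with the Euclidean norm. -/
def cube (k : ℕ) : Set (EuclideanSpace ℝ (Fin k)) :=
  {t | ∀ i, t i ∈ Set.Icc (0:ℝ) 1}

/-- The uniform grid with spacing $1/n$ in the unit cube. -/
def grid (k n : ℕ) : Set (EuclideanSpace ℝ (Fin k)) :=
  {p | ∀ i, ∃ j : ℕ, j ≤ n ∧ p i = (j : ℝ) / n}

/-- A modulus of continuity: `ω : [0,∞) → [0,∞)`, `ω 0 = 0`, nondecreasing,
continuous and subadditive (all conditions on `[0,∞)`). -/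
def IsModulus (ω : ℝ → ℝ) : Prop :=
  ω 0 = 0 ∧ (∀ h, 0 ≤ h → 0 ≤ ω h) ∧ (∀ a b, 0 ≤ a → a ≤ b → ω a ≤ ω b) ∧
  ContinuousOn ω (Set.Ici 0) ∧ ∀ a b, 0 ≤ a → 0 ≤ b → ω (a + b) ≤ ω a + ω b

/-- Membership in the class `X_ω` of functions on the unit cube admitting `ω`
as a modulus of continuity (w.r.t. the Euclidean norm). -/
def MemXomega (k : ℕ) (ω : ℝ → ℝ) (x : EuclideanSpace ℝ (Fin k) → ℝ) : Prop :=
  ∀ t ∈ cube k, ∀ s ∈ cube k, |x t - x s| ≤ ω (dist t s)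

/-!
Reconstructing from the value at a nearest grid point errs by at most `ω(dist τ G_n)`, and every
point of the cube lies within `√k/(2n)` of the grid. Conversely, `b = ω(dist(·, G_n))` and `-b`
both lie in the class (they are bounded by `ω(√k/(2n)) ≤ R`) and have the same grid data `0`,
so any reconstruction misses one of them by `b(c)` at the centre `c` of a corner cell; `c` is at
distance `√k/(2n)` from the grid.
-/

open Metric Set

section Minimax

variable {E : Type*} {S G : Set E} {P : (E → ℝ) → Prop}

theorem iInf_iSup_le_of_forall_abs_sub_le (near : E → G) {ε : ℝ}
    (h : ∀ x, P x → ∀ τ ∈ S, |x τ - x (near τ)| ≤ ε) :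
    (⨅ g : (G → ℝ) → E → ℝ, ⨆ x : {x // P x}, ⨆ τ : S,
      ENNReal.ofReal |x.1 τ.1 - g (fun p => x.1 p.1) τ.1|) ≤ ENNReal.ofReal ε :=
  iInf_le_of_le (fun data τ => data (near τ)) <|
    iSup₂_le fun x τ => ENNReal.ofReal_le_ofReal (h x.1 x.2 τ.1 τ.2)

theorem ofReal_le_iInf_iSup_of_vanishing_pair (b : E → ℝ) (hb : P b) (hnb : P (-b))
    (hbG : ∀ p ∈ G, b p = 0) {c : E} (hc : c ∈ S) :
    ENNReal.ofReal (b c) ≤ ⨅ g : (G → ℝ) → E → ℝ, ⨆ x : {x // P x}, ⨆ τ : S,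
      ENNReal.ofReal |x.1 τ.1 - g (fun p => x.1 p.1) τ.1| := by
  refine le_iInf fun g => ?_
  have hdata : (fun p : G => b p) = 0 := funext fun p => hbG p p.2
  have hndata : (fun p : G => (-b) p) = 0 := funext fun p => by simp [hbG p p.2]
  rcases le_total (g 0 c) 0 with hv | hv
  · refine le_iSup₂_of_le ⟨b, hb⟩ ⟨c, hc⟩
      (ENNReal.ofReal_le_ofReal ?_)
    rw [hdata]
    exact le_abs.2 (Or.inl (by linarith))
  · refine le_iSup₂_of_le ⟨-b, hnb⟩ ⟨c, hc⟩
      (ENNReal.ofReal_le_ofReal ?_)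
    rw [hndata]
    exact le_abs.2 (Or.inr (by simp only [Pi.neg_apply]; linarith))

end Minimax

theorem EuclideanSpace.dist_le_sqrt_card_mul {ι : Type*} [Fintype ι]
    {x y : EuclideanSpace ℝ ι} {r : ℝ} (hr : 0 ≤ r) (h : ∀ i, |x i - y i| ≤ r) :
    dist x y ≤ √(Fintype.card ι) * r := by
  calc dist x y = √(∑ i, dist (x i) (y i) ^ 2) := EuclideanSpace.dist_eq x y
    _ ≤ √(∑ _i : ι, r ^ 2) := by
      gcongr with i
      exact (Real.dist_eq _ _).trans_le (h i)
    _ = √(Fintype.card ι) * r := by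
      simp [Real.sqrt_mul, Real.sqrt_sq hr]

theorem EuclideanSpace.sqrt_card_mul_le_dist {ι : Type*} [Fintype ι]
    {x y : EuclideanSpace ℝ ι} {r : ℝ} (hr : 0 ≤ r) (h : ∀ i, r ≤ |x i - y i|) :
    √(Fintype.card ι) * r ≤ dist x y := by
  calc √(Fintype.card ι) * r = √(∑ _i : ι, r ^ 2) := by
        simp [Real.sqrt_mul, Real.sqrt_sq hr]
    _ ≤ √(∑ i, dist (x i) (y i) ^ 2) := by
      gcongr with i
      exact (h i).trans_eq (Real.dist_eq _ _).symm
    _ = dist x y := (EuclideanSpace.dist_eq x y).symm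

-- `min n` keeps the rounded point in the grid also off the cube, where it is never used.
def gridRound (n : ℕ) (s : ℝ) : ℕ :=
  min n ⌊n * s + 1 / 2⌋₊

theorem abs_sub_gridRound_div_le {n : ℕ} (hn : 0 < n) {s : ℝ} (hs : s ∈ Icc (0 : ℝ) 1) :
    |s - gridRound n s / n| ≤ 1 / (2 * n) := by
  have hn' : (0 : ℝ) < n := Nat.cast_pos.2 hn
  have hns0 : 0 ≤ n * s := mul_nonneg hn'.le hs.1
  have hns : n * s ≤ n := mul_le_of_le_one_right hn'.le hs.2
  have hfloor : ⌊n * s + 1 / 2⌋₊ ≤ n := by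
    have : ⌊n * s + 1 / 2⌋₊ < n + 1 := by
      rw [Nat.floor_lt (by linarith)]
      push_cast
      linarith
    omega
  have hle : (⌊n * s + 1 / 2⌋₊ : ℝ) ≤ n * s + 1 / 2 := Nat.floor_le (by linarith)
  have hlt : n * s + 1 / 2 < ⌊n * s + 1 / 2⌋₊ + 1 := Nat.lt_floor_add_one _
  rw [gridRound, min_eq_right hfloor, show s - ⌊n * s + 1 / 2⌋₊ / n = (n * s - ⌊n * s + 1 / 2⌋₊) / n
    by field_simp, abs_div, abs_of_pos hn', show (1 : ℝ) / (2 * n) = 1 / 2 / n by ring]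
  gcongr
  exact abs_le.2 ⟨by linarith, by linarith⟩

def nearestGridPoint (k n : ℕ) (τ : EuclideanSpace ℝ (Fin k)) : EuclideanSpace ℝ (Fin k) :=
  WithLp.toLp 2 fun i => (gridRound n (τ i) : ℝ) / n

theorem nearestGridPoint_mem_grid (k n : ℕ) (τ : EuclideanSpace ℝ (Fin k)) :
    nearestGridPoint k n τ ∈ grid k n :=
  fun _ => ⟨_, min_le_left _ _, rfl⟩

theorem dist_nearestGridPoint_le {k n : ℕ} (hn : 0 < n) {τ : EuclideanSpace ℝ (Fin k)}
    (hτ : τ ∈ cube k) : dist τ (nearestGridPoint k n τ) ≤ √k / (2 * n) := by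
  have h := EuclideanSpace.dist_le_sqrt_card_mul (x := τ) (y := nearestGridPoint k n τ)
    (by positivity) fun i => abs_sub_gridRound_div_le hn (hτ i)
  rwa [Fintype.card_fin, mul_one_div] at h

theorem grid_subset_cube (k n : ℕ) : grid k n ⊆ cube k := by
  intro p hp i
  obtain ⟨j, hj, hpj⟩ := hp i
  rw [hpj]
  exact ⟨by positivity, div_le_one_of_le₀ (Nat.cast_le.2 hj) n.cast_nonneg⟩

theorem infDist_grid_le {k n : ℕ} (hn : 0 < n) {τ : EuclideanSpace ℝ (Fin k)}
    (hτ : τ ∈ cube k) : infDist τ (grid k n) ≤ √k / (2 * n) :=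
  (infDist_le_dist_of_mem (nearestGridPoint_mem_grid k n τ)).trans
    (dist_nearestGridPoint_le hn hτ)

def cornerCellCenter (k n : ℕ) : EuclideanSpace ℝ (Fin k) :=
  WithLp.toLp 2 fun _ => 1 / (2 * n)

theorem cornerCellCenter_mem_cube {k n : ℕ} (hn : 0 < n) : cornerCellCenter k n ∈ cube k := by
  have hn' : (1 : ℝ) ≤ n := Nat.one_le_cast.2 hn
  refine fun _ => ⟨show (0 : ℝ) ≤ 1 / (2 * n) by positivity, ?_⟩
  rw [cornerCellCenter, div_le_one (by positivity)]
  linarith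

theorem half_div_le_abs_sub_nat_div {n : ℕ} (hn : 0 < n) (j : ℕ) :
    1 / (2 * n) ≤ |(1 : ℝ) / (2 * n) - j / n| := by
  have hn' : (0 : ℝ) < n := Nat.cast_pos.2 hn
  rcases j.eq_zero_or_pos with rfl | hj
  · simp
  · have hj' : (1 : ℝ) / n ≤ j / n := by gcongr; exact Nat.one_le_cast.2 hj
    have hhalf : (1 : ℝ) / (2 * n) + 1 / (2 * n) = 1 / n := by ring
    exact le_abs.2 (Or.inr (by linarith))

theorem le_infDist_cornerCellCenter {k n : ℕ} (hn : 0 < n) :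
    √k / (2 * n) ≤ infDist (cornerCellCenter k n) (grid k n) := by
  have : Nonempty (grid k n) := ⟨⟨nearestGridPoint k n 0, nearestGridPoint_mem_grid k n 0⟩⟩
  rw [infDist_eq_iInf]
  refine le_ciInf fun p => ?_
  have h := EuclideanSpace.sqrt_card_mul_le_dist (x := cornerCellCenter k n) (y := p.1)
    (r := 1 / (2 * n)) (by positivity) fun i => by
      obtain ⟨j, -, hpj⟩ := p.2 i
      rw [hpj]
      exact half_div_le_abs_sub_nat_div hn j
  rwa [Fintype.card_fin, mul_one_div] at h

section Modulus

variable {ω : ℝ → ℝ}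

theorem IsModulus.abs_sub_comp_le {X : Type*} [PseudoMetricSpace X] (hω : IsModulus ω)
    {f : X → ℝ} (hf0 : ∀ t, 0 ≤ f t) (hf : ∀ t s, f t ≤ f s + dist t s) (t s : X) :
    |ω (f t) - ω (f s)| ≤ ω (dist t s) := by
  obtain ⟨-, -, hmono, -, hsub⟩ := hω
  have key : ∀ t s, ω (f t) - ω (f s) ≤ ω (dist t s) := fun t s => by
    linarith [hmono _ _ (hf0 t) (hf t s), hsub _ _ (hf0 s) (dist_nonneg (x := t) (y := s))]
  exact abs_sub_le_iff.2 ⟨key t s, dist_comm t s ▸ key s t⟩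

theorem IsModulus.memXomega_comp_infDist {k : ℕ} (hω : IsModulus ω)
    (G : Set (EuclideanSpace ℝ (Fin k))) : MemXomega k ω fun t => ω (infDist t G) :=
  fun t _ s _ => hω.abs_sub_comp_le (fun _ => infDist_nonneg)
    (fun _ _ => infDist_le_infDist_add_dist) t s

theorem MemXomega.neg {k : ℕ} {x : EuclideanSpace ℝ (Fin k) → ℝ} (hx : MemXomega k ω x) :
    MemXomega k ω (-x) :=
  fun t ht s hs => by
    rw [Pi.neg_apply, Pi.neg_apply, neg_sub_neg, dist_comm]
    exact hx s hs t ht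

end Modulus

theorem minimax_reconstruction_error_eq_general
    (k n : ℕ) (hn : 1 ≤ n)
    (ω : ℝ → ℝ) (hω : IsModulus ω)
    (R : ℝ) (hR : ω (Real.sqrt k / (2 * n)) ≤ R) :
    (⨅ g : (↥(grid k n) → ℝ) → (EuclideanSpace ℝ (Fin k) → ℝ),
      ⨆ x : {x : EuclideanSpace ℝ (Fin k) → ℝ //
              MemXomega k ω x ∧ ∀ t ∈ cube k, |x t| ≤ R},
      ⨆ τ : cube k,
        ENNReal.ofReal |x.1 τ.1 - g (fun p => x.1 p.1) τ.1|)
      = ENNReal.ofReal (ω (Real.sqrt k / (2 * n))) := by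
  have hmono := hω.2.2.1
  set bump : EuclideanSpace ℝ (Fin k) → ℝ := fun t => ω (infDist t (grid k n))
  have hbump : ∀ t ∈ cube k, |bump t| ≤ R := fun t ht => by
    rw [abs_of_nonneg (hω.2.1 _ infDist_nonneg)]
    exact (hmono _ _ infDist_nonneg (infDist_grid_le hn ht)).trans hR
  apply le_antisymm
  · refine iInf_iSup_le_of_forall_abs_sub_le
      (fun τ => ⟨nearestGridPoint k n τ, nearestGridPoint_mem_grid k n τ⟩) fun x hx τ hτ => ?_
    exact (hx.1 τ hτ _ (grid_subset_cube k n (nearestGridPoint_mem_grid k n τ))).trans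
      (hmono _ _ dist_nonneg (dist_nearestGridPoint_le hn hτ))
  · calc ENNReal.ofReal (ω (√k / (2 * n)))
        ≤ ENNReal.ofReal (bump (cornerCellCenter k n)) :=
          ENNReal.ofReal_le_ofReal (hmono _ _ (by positivity) (le_infDist_cornerCellCenter hn))
      _ ≤ _ := ofReal_le_iInf_iSup_of_vanishing_pair bump
          ⟨hω.memXomega_comp_infDist _, hbump⟩
          ⟨(hω.memXomega_comp_infDist _).neg, by simpa only [Pi.neg_apply, abs_neg] using hbump⟩
          (fun p hp => by simp only [bump, infDist_zero_of_mem hp, hω.1])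
          (cornerCellCenter_mem_cube hn)

/-- For a strictly increasing modulus of continuity `ω` and
`R ≥ ω(√k/(2n))`, the minimax reconstruction error (uniform norm) over the
bounded class `U = {x ∈ X_ω : sup |x| ≤ R}` from values on the uniform grid
`G_n` equals `ω(√k/(2n))`. -/
theorem minimax_reconstruction_error_eq
    (k n : ℕ) (hk : 1 ≤ k) (hn : 1 ≤ n)
    (ω : ℝ → ℝ) (hω : IsModulus ω)
    (hstrict : ∀ a b : ℝ, 0 ≤ a → a < b → ω a < ω b)
    (R : ℝ) (hR : ω (Real.sqrt k / (2 * n)) ≤ R) :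
    (⨅ g : (↥(grid k n) → ℝ) → (EuclideanSpace ℝ (Fin k) → ℝ),
      ⨆ x : {x : EuclideanSpace ℝ (Fin k) → ℝ //
              MemXomega k ω x ∧ ∀ t ∈ cube k, |x t| ≤ R},
      ⨆ τ : cube k,
        ENNReal.ofReal |x.1 τ.1 - g (fun p => x.1 p.1) τ.1|)
      = ENNReal.ofReal (ω (Real.sqrt k / (2 * n))) :=
  minimax_reconstruction_error_eq_general k n hn ω hω R hR
end
end

section
/- Let ω be a modulus of continuity, let t¹, …, t^m be finitely many points in ℝ^k, let a ∈ ℝ, and let τ ∈ ℝ^k. Consider the set of all functions x : ℝ^k → ℝ admitting ω as modulus of continuity (|x(t) − x(s)| ≤ ω(‖t − s‖₂) for all t,s) and satisfying x(tⁱ) = a for i = 1, …, m. Then the minimax estimation error of the value at τ given these constraints, inf_{u ∈ ℝ} sup over all such x of |x(τ) − u|, equals min_{1≤i≤m} ω(‖τ − tⁱ‖₂), and the optimal choice is u = a. -/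
noncomputable section

/-- Given a modulus of continuity `ω`, finitely many points
`t¹, …, tᵐ` in `ℝ^k`, a common value `a`, and a point `τ`, the minimax error of
estimating `x(τ)` over all functions `x : ℝ^k → ℝ` admitting `ω` as modulus of
continuity and satisfying `x(tⁱ) = a` for all `i`, equals
`minᵢ ω(‖τ − tⁱ‖₂)`, and the optimal choice is `u = a`. -/
theorem minimax_value_estimate
    (k m : ℕ) (hm : 1 ≤ m) (ω : ℝ → ℝ) (hω : IsModulus ω)
    (t : Fin m → EuclideanSpace ℝ (Fin k)) (a : ℝ)
    (τ : EuclideanSpace ℝ (Fin k)) :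
    (⨅ u : ℝ, ⨆ x : {x : EuclideanSpace ℝ (Fin k) → ℝ //
        (∀ t' s', |x t' - x s'| ≤ ω (dist t' s')) ∧ ∀ i, x (t i) = a},
      |x.1 τ - u|) = ⨅ i, ω (dist τ (t i)) ∧
    (⨆ x : {x : EuclideanSpace ℝ (Fin k) → ℝ //
        (∀ t' s', |x t' - x s'| ≤ ω (dist t' s')) ∧ ∀ i, x (t i) = a},
      |x.1 τ - a|) = ⨅ i, ω (dist τ (t i)) := by
  obtain ⟨hω0, hωpos, hωmono, _, hωsub⟩ := hω
  haveI : Nonempty (Fin m) := ⟨⟨0, hm⟩⟩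
  set g : EuclideanSpace ℝ (Fin k) → ℝ := fun s => ⨅ i, ω (dist s (t i)) with hg
  have hbb : ∀ s, BddBelow (Set.range fun i => ω (dist s (t i))) := by
    intro s
    exact ⟨0, by rintro _ ⟨i, rfl⟩; exact hωpos _ dist_nonneg⟩
  have hg0 : ∀ s, 0 ≤ g s := fun s => le_ciInf fun i => hωpos _ dist_nonneg
  have hgle : ∀ s i, g s ≤ ω (dist s (t i)) := fun s i => ciInf_le (hbb s) i
  have hlip : ∀ t' s', g t' - g s' ≤ ω (dist t' s') := by
    intro t' s'
    have key : g t' - ω (dist t' s') ≤ g s' := by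
      refine le_ciInf fun j => ?_
      have : g t' ≤ ω (dist t' s') + ω (dist s' (t j)) :=
        calc g t' ≤ ω (dist t' (t j)) := hgle t' j
          _ ≤ ω (dist t' s' + dist s' (t j)) := hωmono _ _ dist_nonneg (dist_triangle _ _ _)
          _ ≤ ω (dist t' s') + ω (dist s' (t j)) := hωsub _ _ dist_nonneg dist_nonneg
      linarith
    linarith
  have hgabs : ∀ t' s', |g t' - g s'| ≤ ω (dist t' s') := by
    intro t' s'
    rw [abs_sub_le_iff]
    exact ⟨hlip t' s', by rw [dist_comm]; exact hlip s' t'⟩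
  have hgt : ∀ j, g (t j) = 0 := by
    intro j
    refine le_antisymm ?_ (hg0 _)
    have := hgle (t j) j
    rwa [dist_self, hω0] at this
  set S := {x : EuclideanSpace ℝ (Fin k) → ℝ //
      (∀ t' s', |x t' - x s'| ≤ ω (dist t' s')) ∧ ∀ i, x (t i) = a} with hS
  have hxplus : (∀ t' s', |(a + g t') - (a + g s')| ≤ ω (dist t' s')) ∧
      ∀ i, a + g (t i) = a := by
    constructor
    · intro t' s'; simpa using hgabs t' s'
    · intro i; rw [hgt i, add_zero]
  have hxminus : (∀ t' s', |(a - g t') - (a - g s')| ≤ ω (dist t' s')) ∧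
      ∀ i, a - g (t i) = a := by
    constructor
    · intro t' s'
      have : (a - g t') - (a - g s') = -(g t' - g s') := by ring
      rw [this, abs_neg]; exact hgabs t' s'
    · intro i; rw [hgt i, sub_zero]
  have hxconst : (∀ t' s' : EuclideanSpace ℝ (Fin k), |a - a| ≤ ω (dist t' s')) ∧
      ∀ i : Fin m, a = a := by
    refine ⟨fun t' s' => ?_, fun _ => rfl⟩
    simp [hωpos _ dist_nonneg]
  haveI : Nonempty S := ⟨⟨fun _ => a, hxconst⟩⟩
  have hbound : ∀ x : S, |x.1 τ - a| ≤ g τ := by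
    intro x
    refine le_ciInf fun i => ?_
    have := x.2.1 τ (t i)
    rwa [x.2.2 i] at this
  have hbdda : ∀ u : ℝ, BddAbove (Set.range fun x : S => |x.1 τ - u|) := by
    intro u
    refine ⟨g τ + |a - u|, ?_⟩
    rintro _ ⟨x, rfl⟩
    calc |x.1 τ - u| = |(x.1 τ - a) + (a - u)| := by ring_nf
      _ ≤ |x.1 τ - a| + |a - u| := abs_add_le _ _
      _ ≤ g τ + |a - u| := by linarith [hbound x]
  have hsup : (⨆ x : S, |x.1 τ - a|) = g τ := by
    refine le_antisymm (ciSup_le hbound) ?_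
    have := le_ciSup (hbdda a) (⟨fun s => a + g s, hxplus⟩ : S)
    simpa [abs_of_nonneg (hg0 τ)] using this
  refine ⟨?_, hsup⟩
  refine le_antisymm ?_ ?_
  · have : (⨅ u : ℝ, ⨆ x : S, |x.1 τ - u|) ≤ ⨆ x : S, |x.1 τ - a| := by
      refine ciInf_le ⟨0, ?_⟩ a
      rintro _ ⟨u, rfl⟩
      exact le_trans (abs_nonneg _) (le_ciSup (hbdda u) (⟨fun _ => a, hxconst⟩ : S))
    rw [hsup] at this
    exact this
  · refine le_ciInf fun u => ?_
    have h1 : |(a + g τ) - u| ≤ ⨆ x : S, |x.1 τ - u| :=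
      le_ciSup (hbdda u) (⟨fun s => a + g s, hxplus⟩ : S)
    have h2 : |(a - g τ) - u| ≤ ⨆ x : S, |x.1 τ - u| :=
      le_ciSup (hbdda u) (⟨fun s => a - g s, hxminus⟩ : S)
    have h3 : 2 * g τ ≤ |(a + g τ) - u| + |(a - g τ) - u| := by
      have := abs_sub_abs_le_abs_sub ((a + g τ) - u) ((a - g τ) - u)
      have h4 : |((a + g τ) - u) - ((a - g τ) - u)| = 2 * g τ := by
        have : ((a + g τ) - u) - ((a - g τ) - u) = 2 * g τ := by ring
        rw [this, abs_of_nonneg (by linarith [hg0 τ])]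
      calc 2 * g τ = |((a + g τ) - u) - ((a - g τ) - u)| := h4.symm
        _ ≤ |(a + g τ) - u| + |(a - g τ) - u| := abs_sub _ _
    linarith
end
end
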